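/- There exists a constant C > 0, independent of λ, such that for every λ > 0 and all real symmetric 2×2 matrices A and B one has G_λ(A + B) ≤ C·(G_λ(A) + G_λ(B)). -/

import Mathlib

/-!
For a symmetric `ξ` write `t = tr ξ` and `d = √(tr² - 4 det)`, which is the Euclidean length of
`(ξ₀₀ - ξ₁₁, 2ξ₀₁)`. Then `ρ⁰(ξ) = max |t| d`, which is subadditive, while `4 det = t² - d²` and
`2|ξ|² = t² + d²`. Consequently `G_λ(ξ)` agrees up to a factor `2` with `max ρ (ρ² / √λ)` evaluated
at `ρ = ρ⁰(ξ)`, a monotone function satisfying `f(a + b) ≤ 2 (f a + f b)`. This gives the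
inequality with `C = 8`.
-/

open Matrix Real

/-- First eigenvalue of a (symmetric) 2×2 real matrix. -/
noncomputable def eig1 (ξ : Matrix (Fin 2) (Fin 2) ℝ) : ℝ :=
  (ξ.trace + Real.sqrt (ξ.trace ^ 2 - 4 * ξ.det)) / 2

/-- Second eigenvalue of a (symmetric) 2×2 real matrix. -/
noncomputable def eig2 (ξ : Matrix (Fin 2) (Fin 2) ℝ) : ℝ :=
  (ξ.trace - Real.sqrt (ξ.trace ^ 2 - 4 * ξ.det)) / 2

/-- ρ⁰(ξ) = |λ₁(ξ)| + |λ₂(ξ)|. -/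
noncomputable def rho0 (ξ : Matrix (Fin 2) (Fin 2) ℝ) : ℝ :=
  |eig1 ξ| + |eig2 ξ|

/-- G_λ(ξ) = 2(ρ⁰(ξ) − λ^{-1/2}|det ξ|) if ρ⁰(ξ) ≤ √λ, and λ^{1/2} + λ^{-1/2}|ξ|² otherwise. -/
noncomputable def Glam (lam : ℝ) (ξ : Matrix (Fin 2) (Fin 2) ℝ) : ℝ :=
  if rho0 ξ ≤ Real.sqrt lam then 2 * (rho0 ξ - |ξ.det| / Real.sqrt lam)
  else Real.sqrt lam + (∑ i, ∑ j, (ξ i j) ^ 2) / Real.sqrt lam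

lemma abs_half_add_add_abs_half_sub {t s : ℝ} (hs : 0 ≤ s) :
    |(t + s) / 2| + |(t - s) / 2| = max |t| s := by
  rcases abs_cases t with ⟨ht, _⟩ | ⟨ht, _⟩ <;> rcases max_cases |t| s with ⟨hm, _⟩ | ⟨hm, _⟩ <;>
    rw [hm] <;> rw [ht] at * <;>
    rcases abs_cases ((t + s) / 2) with ⟨h₁, _⟩ | ⟨h₁, _⟩ <;>
    rcases abs_cases ((t - s) / 2) with ⟨h₂, _⟩ | ⟨h₂, _⟩ <;> linarith

section EuclideanBounds

variable {t d : ℝ}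

lemma max_abs_sq_le_sq_add_sq : max |t| d ^ 2 ≤ t ^ 2 + d ^ 2 := by
  rcases max_cases |t| d with ⟨h, _⟩ | ⟨h, _⟩ <;> rw [h] <;> nlinarith [sq_abs t]

lemma sq_le_max_abs_sq_left : t ^ 2 ≤ max |t| d ^ 2 := by
  rw [← sq_abs]; exact pow_le_pow_left₀ (abs_nonneg t) (le_max_left _ _) 2

lemma sq_le_max_abs_sq_right (hd : 0 ≤ d) : d ^ 2 ≤ max |t| d ^ 2 :=
  pow_le_pow_left₀ hd (le_max_right _ _) 2

lemma sq_add_sq_le_two_mul_max_abs_sq (hd : 0 ≤ d) : t ^ 2 + d ^ 2 ≤ 2 * max |t| d ^ 2 := by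
  linarith [sq_le_max_abs_sq_left (t := t) (d := d), sq_le_max_abs_sq_right (t := t) hd]

lemma abs_sq_sub_sq_le_max_abs_sq (hd : 0 ≤ d) : |t ^ 2 - d ^ 2| ≤ max |t| d ^ 2 := by
  have ht := sq_le_max_abs_sq_left (t := t) (d := d)
  have hd' := sq_le_max_abs_sq_right (t := t) hd
  rw [abs_le]; constructor <;> nlinarith [sq_nonneg t, sq_nonneg d]

end EuclideanBounds

-- Encoded in `ℂ` so that `‖discVec ξ‖` is the Euclidean length of `(ξ₀₀ - ξ₁₁, 2ξ₀₁)`.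
def discVec (ξ : Matrix (Fin 2) (Fin 2) ℝ) : ℂ := ⟨ξ 0 0 - ξ 1 1, 2 * ξ 0 1⟩

lemma discVec_add (A B : Matrix (Fin 2) (Fin 2) ℝ) : discVec (A + B) = discVec A + discVec B := by
  apply Complex.ext <;> simp only [discVec, Matrix.add_apply, Complex.add_re, Complex.add_im] <;> ring

section Symmetric

variable {ξ : Matrix (Fin 2) (Fin 2) ℝ} (hξ : ξ.IsSymm)
include hξ

lemma Matrix.IsSymm.trace_sq_sub_four_mul_det : ξ.trace ^ 2 - 4 * ξ.det = ‖discVec ξ‖ ^ 2 := by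
  rw [Complex.sq_norm, discVec, Complex.normSq_mk, trace_fin_two, det_fin_two, hξ.apply 0 1]
  ring

lemma Matrix.IsSymm.four_mul_det : 4 * ξ.det = ξ.trace ^ 2 - ‖discVec ξ‖ ^ 2 := by
  linarith [hξ.trace_sq_sub_four_mul_det]

lemma Matrix.IsSymm.two_mul_sum_sq : 2 * ∑ i, ∑ j, ξ i j ^ 2 = ξ.trace ^ 2 + ‖discVec ξ‖ ^ 2 := by
  rw [Complex.sq_norm, discVec, Complex.normSq_mk, trace_fin_two]
  simp only [Fin.sum_univ_two, hξ.apply 0 1]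
  ring

lemma Matrix.IsSymm.rho0_eq : rho0 ξ = max |ξ.trace| ‖discVec ξ‖ := by
  rw [rho0, eig1, eig2, hξ.trace_sq_sub_four_mul_det, sqrt_sq (norm_nonneg _),
    abs_half_add_add_abs_half_sub (norm_nonneg _)]

lemma Matrix.IsSymm.four_mul_abs_det_le : 4 * |ξ.det| ≤ rho0 ξ ^ 2 := by
  have h := abs_sq_sub_sq_le_max_abs_sq (t := ξ.trace) (norm_nonneg (discVec ξ))
  rwa [← hξ.four_mul_det, abs_mul, abs_of_pos (four_pos : (0 : ℝ) < 4), ← hξ.rho0_eq] at h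

lemma Matrix.IsSymm.sum_sq_le : ∑ i, ∑ j, ξ i j ^ 2 ≤ rho0 ξ ^ 2 := by
  have := sq_add_sq_le_two_mul_max_abs_sq (t := ξ.trace) (norm_nonneg (discVec ξ))
  rw [hξ.rho0_eq]; linarith [hξ.two_mul_sum_sq]

lemma Matrix.IsSymm.rho0_sq_le : rho0 ξ ^ 2 ≤ 2 * ∑ i, ∑ j, ξ i j ^ 2 := by
  rw [hξ.rho0_eq, hξ.two_mul_sum_sq]; exact max_abs_sq_le_sq_add_sq

end Symmetric

lemma rho0_nonneg (ξ : Matrix (Fin 2) (Fin 2) ℝ) : 0 ≤ rho0 ξ :=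
  add_nonneg (abs_nonneg _) (abs_nonneg _)

lemma rho0_add_le {A B : Matrix (Fin 2) (Fin 2) ℝ} (hA : A.IsSymm) (hB : B.IsSymm) :
    rho0 (A + B) ≤ rho0 A + rho0 B := by
  rw [(hA.add hB).rho0_eq, hA.rho0_eq, hB.rho0_eq, trace_add, discVec_add]
  exact max_le ((abs_add_le _ _).trans (add_le_add (le_max_left _ _) (le_max_left _ _)))
    ((norm_add_le _ _).trans (add_le_add (le_max_right _ _) (le_max_right _ _)))

noncomputable def linQuadMax (μ r : ℝ) : ℝ := max r (r ^ 2 / μ)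

section LinQuadMax

variable {μ a b : ℝ}

lemma linQuadMax_mono (hμ : 0 ≤ μ) (ha : 0 ≤ a) (hab : a ≤ b) : linQuadMax μ a ≤ linQuadMax μ b :=
  max_le_max hab (div_le_div_of_nonneg_right (pow_le_pow_left₀ ha hab 2) hμ)

lemma linQuadMax_add_le (hμ : 0 ≤ μ) :
    linQuadMax μ (a + b) ≤ 2 * (linQuadMax μ a + linQuadMax μ b) := by
  have ha := le_max_left a (a ^ 2 / μ)
  have hb := le_max_left b (b ^ 2 / μ)
  have ha' := le_max_right a (a ^ 2 / μ)
  have hb' := le_max_right b (b ^ 2 / μ)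
  have ha₀ : 0 ≤ a ^ 2 / μ := by positivity
  have hb₀ : 0 ≤ b ^ 2 / μ := by positivity
  have hsq : (a + b) ^ 2 / μ ≤ 2 * (a ^ 2 / μ) + 2 * (b ^ 2 / μ) := by
    rw [← mul_div_assoc, ← mul_div_assoc, ← add_div]
    exact div_le_div_of_nonneg_right (by nlinarith [sq_nonneg (a - b)]) hμ
  unfold linQuadMax
  apply max_le <;> linarith

end LinQuadMax

section Comparison

variable {lam : ℝ} (hlam : 0 < lam) {ξ : Matrix (Fin 2) (Fin 2) ℝ} (hξ : ξ.IsSymm)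
include hlam hξ

lemma Glam_le_two_mul_linQuadMax : Glam lam ξ ≤ 2 * linQuadMax (√lam) (rho0 ξ) := by
  have hμ : 0 < √lam := sqrt_pos.mpr hlam
  have hρ := rho0_nonneg ξ
  rw [Glam, linQuadMax]
  split_ifs with hsmall
  · have : 0 ≤ |ξ.det| / √lam := by positivity
    linarith [le_max_left (rho0 ξ) (rho0 ξ ^ 2 / √lam)]
  · have hμ_le : √lam ≤ rho0 ξ ^ 2 / √lam := by rw [le_div_iff₀ hμ]; nlinarith
    have hsum : (∑ i, ∑ j, ξ i j ^ 2) / √lam ≤ rho0 ξ ^ 2 / √lam := by gcongr; exact hξ.sum_sq_le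
    linarith [le_max_right (rho0 ξ) (rho0 ξ ^ 2 / √lam)]

lemma linQuadMax_le_two_mul_Glam : linQuadMax (√lam) (rho0 ξ) ≤ 2 * Glam lam ξ := by
  have hμ : 0 < √lam := sqrt_pos.mpr hlam
  have hρ := rho0_nonneg ξ
  have hdet := hξ.four_mul_abs_det_le
  rw [Glam, linQuadMax]
  split_ifs with hsmall
  · have hdet' : |ξ.det| / √lam ≤ rho0 ξ / 4 := by rw [div_le_iff₀ hμ]; nlinarith
    have hquad : rho0 ξ ^ 2 / √lam ≤ rho0 ξ := by rw [div_le_iff₀ hμ]; nlinarith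
    apply max_le <;> linarith
  · rw [not_le] at hsmall
    have hquad : rho0 ξ ^ 2 / √lam ≤ 2 * ((∑ i, ∑ j, ξ i j ^ 2) / √lam) := by
      rw [← mul_div_assoc]; gcongr; exact hξ.rho0_sq_le
    have hlin : rho0 ξ ≤ rho0 ξ ^ 2 / √lam := by rw [le_div_iff₀ hμ]; nlinarith
    apply max_le <;> linarith

end Comparison

/-- There is a constant C > 0, independent of λ, with
G_λ(A+B) ≤ C (G_λ(A) + G_λ(B)) for all λ > 0 and all symmetric 2×2 matrices A, B. -/
theorem Glam_triangle :
    ∃ C : ℝ, 0 < C ∧ ∀ (lam : ℝ), 0 < lam →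
      ∀ (A B : Matrix (Fin 2) (Fin 2) ℝ), A.IsSymm → B.IsSymm →
        Glam lam (A + B) ≤ C * (Glam lam A + Glam lam B) := by
  refine ⟨8, by norm_num, fun lam hlam A B hA hB => ?_⟩
  have hμ : 0 ≤ √lam := sqrt_nonneg lam
  calc Glam lam (A + B) ≤ 2 * linQuadMax (√lam) (rho0 (A + B)) :=
        Glam_le_two_mul_linQuadMax hlam (hA.add hB)
    _ ≤ 2 * linQuadMax (√lam) (rho0 A + rho0 B) := by
        gcongr; exact linQuadMax_mono hμ (rho0_nonneg _) (rho0_add_le hA hB)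
    _ ≤ 2 * (2 * (linQuadMax (√lam) (rho0 A) + linQuadMax (√lam) (rho0 B))) := by
        gcongr; exact linQuadMax_add_le hμ
    _ ≤ 8 * (Glam lam A + Glam lam B) := by
        linarith [linQuadMax_le_two_mul_Glam hlam hA, linQuadMax_le_two_mul_Glam hlam hB]
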